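/- In the two-switch (four-configuration) protocol with configurations {0, 1, Next, Ready}, the following invariant holds at every point of any execution: either all rooms are in configuration 0 or 1 and there is exactly one active prisoner, or all rooms are in configuration 0 except exactly one room in configuration Next or Ready and there is no active prisoner. -/
import Mathlib


/-- The four configurations available with two switches. -/
inductive C4 where
  | zero | one | next | ready
deriving DecidableEq

/-- Global state: room configurations, each prisoner's local program state
(line of his algorithm, loop counter), and the declaration flag. -/
structure TS (n r : ℕ) where
  rooms : Fin r → C4
  loc : Fin n → ℕ × ℕ
  declared : Bool

/-- The leader's algorithm: flip all `r` rooms `0 → 1` (line 0), then all `r`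
rooms `1 → 0` (line 1), then one room `0 → Next` (line 2), then `n` times flip
a room `Next → Ready` (line 3), finally declaring; line 4 is termination.
Returns (new local state, configuration left in the room, declare?). -/
def leaderAct (r n : ℕ) (st : ℕ × ℕ) (c : C4) : (ℕ × ℕ) × C4 × Bool :=
  match st.1 with
  | 0 => if c = C4.zero then
           (if st.2 + 1 = r then ((1, 0), C4.one, false)
            else ((0, st.2 + 1), C4.one, false))
         else (st, c, false)
  | 1 => if c = C4.one then
           (if st.2 + 1 = r then ((2, 0), C4.zero, false)
            else ((1, st.2 + 1), C4.zero, false))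
         else (st, c, false)
  | 2 => if c = C4.zero then ((3, 0), C4.next, false) else (st, c, false)
  | 3 => if c = C4.next then
           (if st.2 + 1 = n then ((4, 0), C4.ready, true)
            else ((3, st.2 + 1), C4.ready, false))
         else (st, c, false)
  | _ => (st, c, false)

/-- A non-leader's algorithm: wait for a room in `Ready` and flip it to `0`
(line 0), then flip all `r` rooms `0 → 1` (line 1), then all `r` rooms
`1 → 0` (line 2), then one room `0 → Next` (line 3); line 4 is termination. -/
def otherAct (r : ℕ) (st : ℕ × ℕ) (c : C4) : (ℕ × ℕ) × C4 × Bool :=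
  match st.1 with
  | 0 => if c = C4.ready then ((1, 0), C4.zero, false) else (st, c, false)
  | 1 => if c = C4.zero then
           (if st.2 + 1 = r then ((2, 0), C4.one, false)
            else ((1, st.2 + 1), C4.one, false))
         else (st, c, false)
  | 2 => if c = C4.one then
           (if st.2 + 1 = r then ((3, 0), C4.zero, false)
            else ((2, st.2 + 1), C4.zero, false))
         else (st, c, false)
  | 3 => if c = C4.zero then ((4, 0), C4.next, false) else (st, c, false)
  | _ => (st, c, false)

/-- One visit of prisoner `v.1` to room `v.2` (with leader `L`). -/
def tsStep {n r : ℕ} (L : Fin n) (v : Fin n × Fin r) (s : TS n r) : TS n r :=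
  let a := if v.1 = L then leaderAct r n (s.loc v.1) (s.rooms v.2)
           else otherAct r (s.loc v.1) (s.rooms v.2)
  { rooms := Function.update s.rooms v.2 a.2.1
    loc := Function.update s.loc v.1 a.1
    declared := s.declared || a.2.2 }

/-- The state after `t` visits; all rooms start in configuration `0`. -/
def tsRun {n r : ℕ} (L : Fin n) (sch : ℕ → Fin n × Fin r) : ℕ → TS n r
  | 0 => ⟨fun _ => C4.zero, fun _ => (0, 0), false⟩
  | t + 1 => tsStep L (sch t) (tsRun L sch t)

/-- A prisoner is exhausted if he has completed all his flipping phases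
(for the leader, everything before the final repeat loop). -/
def tsExhausted {n r : ℕ} (L : Fin n) (s : TS n r) (p : Fin n) : Prop :=
  if p = L then 3 ≤ (s.loc p).1 else 4 ≤ (s.loc p).1

/-- A prisoner is active if he has begun his flipping phases (for non-leaders,
has executed his `Ready → 0` flip) and is not exhausted. -/
def tsActive {n r : ℕ} (L : Fin n) (s : TS n r) (p : Fin n) : Prop :=
  if p = L then (s.loc p).1 < 3 else 1 ≤ (s.loc p).1 ∧ (s.loc p).1 < 4

section TwoSwitchAux

variable {n r : ℕ}

/-- A prisoner is in an "inactive" local state. -/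
def InactiveAt (L : Fin n) (s : TS n r) (q : Fin n) : Prop :=
  if q = L then 3 ≤ (s.loc q).1 else (s.loc q).1 = 0 ∨ (s.loc q).1 = 4

/-- Phase description for an active leader. -/
def PhaseL (s : TS n r) (p : Fin n) : Prop :=
  ((s.loc p).1 = 0 ∧ ∃ S : Finset (Fin r), S.card = (s.loc p).2 ∧ (s.loc p).2 < r ∧
      ∀ x, s.rooms x = if x ∈ S then C4.one else C4.zero) ∨
  ((s.loc p).1 = 1 ∧ ∃ S : Finset (Fin r), S.card = (s.loc p).2 ∧ (s.loc p).2 < r ∧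
      ∀ x, s.rooms x = if x ∈ S then C4.zero else C4.one) ∨
  ((s.loc p).1 = 2 ∧ ∀ x, s.rooms x = C4.zero)

/-- Phase description for an active non-leader. -/
def PhaseO (s : TS n r) (p : Fin n) : Prop :=
  ((s.loc p).1 = 1 ∧ ∃ S : Finset (Fin r), S.card = (s.loc p).2 ∧ (s.loc p).2 < r ∧
      ∀ x, s.rooms x = if x ∈ S then C4.one else C4.zero) ∨
  ((s.loc p).1 = 2 ∧ ∃ S : Finset (Fin r), S.card = (s.loc p).2 ∧ (s.loc p).2 < r ∧
      ∀ x, s.rooms x = if x ∈ S then C4.zero else C4.one) ∨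
  ((s.loc p).1 = 3 ∧ ∀ x, s.rooms x = C4.zero)

def TSInvA (L : Fin n) (s : TS n r) (p : Fin n) : Prop :=
  (∀ q, q ≠ p → InactiveAt L s q) ∧ (if p = L then PhaseL s p else PhaseO s p)

def TSInvB (L : Fin n) (s : TS n r) : Prop :=
  (∃ rm0, (s.rooms rm0 = C4.next ∨ s.rooms rm0 = C4.ready) ∧
    ∀ x, x ≠ rm0 → s.rooms x = C4.zero) ∧
  ∀ q, InactiveAt L s q

def TSInv (L : Fin n) (s : TS n r) : Prop := (∃ p, TSInvA L s p) ∨ TSInvB L s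

lemma tsStep_rooms (L q : Fin n) (rm : Fin r) (s : TS n r) :
    (tsStep L (q, rm) s).rooms = Function.update s.rooms rm
      ((if q = L then leaderAct r n (s.loc q) (s.rooms rm)
        else otherAct r (s.loc q) (s.rooms rm)).2.1) := rfl

lemma tsStep_loc (L q : Fin n) (rm : Fin r) (s : TS n r) :
    (tsStep L (q, rm) s).loc = Function.update s.loc q
      ((if q = L then leaderAct r n (s.loc q) (s.rooms rm)
        else otherAct r (s.loc q) (s.rooms rm)).1) := rfl

lemma leaderAct_high (st : ℕ × ℕ) (c : C4) (h : 4 ≤ st.1) :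
    leaderAct r n st c = (st, c, false) := by
  obtain ⟨l, cnt⟩ := st
  obtain ⟨k, rfl⟩ : ∃ k, l = k + 4 := ⟨l - 4, by omega⟩
  rfl

lemma otherAct_high (st : ℕ × ℕ) (c : C4) (h : 4 ≤ st.1) :
    otherAct r st c = (st, c, false) := by
  obtain ⟨l, cnt⟩ := st
  obtain ⟨k, rfl⟩ : ∃ k, l = k + 4 := ⟨l - 4, by omega⟩
  rfl

lemma inv_ext (L : Fin n) {s s' : TS n r} (h1 : s.rooms = s'.rooms)
    (h2 : s.loc = s'.loc) (h : TSInv L s) : TSInv L s' := by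
  unfold TSInv TSInvA TSInvB InactiveAt PhaseL PhaseO at h ⊢
  rw [h1, h2] at h
  exact h

lemma phaseL_01 {s : TS n r} {p : Fin n} (h : PhaseL s p) :
    ∀ x, s.rooms x = C4.zero ∨ s.rooms x = C4.one := by
  intro x
  rcases h with ⟨_, S, _, _, hR⟩ | ⟨_, S, _, _, hR⟩ | ⟨_, hR⟩ <;>
    first
      | (rw [hR x]; split <;> simp)
      | (rw [hR x]; simp)

lemma phaseO_01 {s : TS n r} {p : Fin n} (h : PhaseO s p) :
    ∀ x, s.rooms x = C4.zero ∨ s.rooms x = C4.one := by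
  intro x
  rcases h with ⟨_, S, _, _, hR⟩ | ⟨_, S, _, _, hR⟩ | ⟨_, hR⟩ <;>
    first
      | (rw [hR x]; split <;> simp)
      | (rw [hR x]; simp)

end TwoSwitchAux

section TwoSwitchStep
variable {n r : ℕ}

lemma leaderAct_eval0 (c2 : ℕ) (c : C4) : leaderAct r n (0, c2) c =
    if c = C4.zero then
      (if c2 + 1 = r then ((1, 0), C4.one, false) else ((0, c2 + 1), C4.one, false))
    else ((0, c2), c, false) := rfl

lemma leaderAct_eval1 (c2 : ℕ) (c : C4) : leaderAct r n (1, c2) c =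
    if c = C4.one then
      (if c2 + 1 = r then ((2, 0), C4.zero, false) else ((1, c2 + 1), C4.zero, false))
    else ((1, c2), c, false) := rfl

lemma leaderAct_eval2 (c2 : ℕ) (c : C4) : leaderAct r n (2, c2) c =
    if c = C4.zero then ((3, 0), C4.next, false) else ((2, c2), c, false) := rfl

lemma leaderAct_eval3 (c2 : ℕ) (c : C4) : leaderAct r n (3, c2) c =
    if c = C4.next then
      (if c2 + 1 = n then ((4, 0), C4.ready, true) else ((3, c2 + 1), C4.ready, false))
    else ((3, c2), c, false) := rfl

lemma otherAct_eval0 (c2 : ℕ) (c : C4) : otherAct r (0, c2) c =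
    if c = C4.ready then ((1, 0), C4.zero, false) else ((0, c2), c, false) := rfl

lemma otherAct_eval1 (c2 : ℕ) (c : C4) : otherAct r (1, c2) c =
    if c = C4.zero then
      (if c2 + 1 = r then ((2, 0), C4.one, false) else ((1, c2 + 1), C4.one, false))
    else ((1, c2), c, false) := rfl

lemma otherAct_eval2 (c2 : ℕ) (c : C4) : otherAct r (2, c2) c =
    if c = C4.one then
      (if c2 + 1 = r then ((3, 0), C4.zero, false) else ((2, c2 + 1), C4.zero, false))
    else ((2, c2), c, false) := rfl

lemma otherAct_eval3 (c2 : ℕ) (c : C4) : otherAct r (3, c2) c =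
    if c = C4.zero then ((4, 0), C4.next, false) else ((3, c2), c, false) := rfl

lemma inv_noop (L q : Fin n) (rm : Fin r) {s : TS n r}
    (hact : (if q = L then leaderAct r n (s.loc q) (s.rooms rm)
             else otherAct r (s.loc q) (s.rooms rm)) = (s.loc q, s.rooms rm, false))
    (h : TSInv L s) : TSInv L (tsStep L (q, rm) s) := by
  refine inv_ext L ?_ ?_ h
  · rw [tsStep_rooms, hact]
    exact (Function.update_eq_self _ _).symm
  · rw [tsStep_loc, hact]
    exact (Function.update_eq_self _ _).symm

lemma inactive_of_other (L : Fin n) {q q' : Fin n} (rm : Fin r) {s : TS n r} (hne : q' ≠ q)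
    (h : InactiveAt L s q') : InactiveAt L (tsStep L (q, rm) s) q' := by
  unfold InactiveAt at h ⊢
  rw [tsStep_loc, Function.update_of_ne hne]
  exact h

lemma update_rooms_insert {f : Fin r → C4} {S : Finset (Fin r)} {a b : C4}
    (hR : ∀ x, f x = if x ∈ S then a else b) (rm : Fin r) :
    ∀ x, Function.update f rm a x = if x ∈ insert rm S then a else b := by
  intro x
  rw [Function.update_apply]
  by_cases hx : x = rm
  · simp [hx]
  · simp only [if_neg hx, hR x, Finset.mem_insert, hx, false_or, if_false]

lemma inv_step (hr : 0 < r) (L q : Fin n) (rm : Fin r) (s : TS n r)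
    (h : TSInv L s) : TSInv L (tsStep L (q, rm) s) := by
  rcases h with ⟨p, hothers, hphase⟩ | ⟨⟨rm0, hrm0, hz⟩, hall⟩
  · -- Case A: one active prisoner p
    have h01 : ∀ x, s.rooms x = C4.zero ∨ s.rooms x = C4.one := by
      by_cases hpL : p = L
      · exact phaseL_01 (by rwa [if_pos hpL] at hphase)
      · exact phaseO_01 (by rwa [if_neg hpL] at hphase)
    by_cases hqp : q = p
    · -- the active prisoner acts
      subst hqp
      -- helper facts used in all the "real flip" subcases
      have hothers' : ∀ q', q' ≠ q → InactiveAt L (tsStep L (q, rm) s) q' :=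
        fun q' hq' => inactive_of_other L rm hq' (hothers q' hq')
      by_cases hqL : q = L
      · rw [if_pos hqL] at hphase
        rcases hphase with ⟨hl, S, hS, hlt, hR⟩ | ⟨hl, S, hS, hlt, hR⟩ | ⟨hl, hR⟩
        · -- leader line 0 : flip 0 → 1
          have hlc : s.loc q = (0, (s.loc q).2) := by rw [← hl]
          by_cases hm : rm ∈ S
          · -- room already one : noop
            have hroom : s.rooms rm = C4.one := by rw [hR rm, if_pos hm]
            apply inv_noop L q rm ?_ (Or.inl ⟨q, hothers, by
              rw [if_pos hqL]; exact Or.inl ⟨hl, S, hS, hlt, hR⟩⟩)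
            rw [if_pos hqL, hlc, hroom, leaderAct_eval0]
            simp
          · have hroom : s.rooms rm = C4.zero := by rw [hR rm, if_neg hm]
            have hact : (if q = L then leaderAct r n (s.loc q) (s.rooms rm)
                else otherAct r (s.loc q) (s.rooms rm)) =
                (if (s.loc q).2 + 1 = r then ((1, 0), C4.one, false)
                 else ((0, (s.loc q).2 + 1), C4.one, false)) := by
              rw [if_pos hqL, hlc, hroom, leaderAct_eval0, if_pos rfl]
            have hrooms' : ∀ x, (tsStep L (q, rm) s).rooms x =
                if x ∈ insert rm S then C4.one else C4.zero := by
              intro x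
              rw [tsStep_rooms, hact]
              split
              · exact update_rooms_insert hR rm x
              · exact update_rooms_insert hR rm x
            have hcard : (insert rm S).card = (s.loc q).2 + 1 := by
              rw [Finset.card_insert_of_notMem hm, hS]
            refine Or.inl ⟨q, hothers', ?_⟩
            rw [if_pos hqL]
            have hloc' : (tsStep L (q, rm) s).loc q =
                (if (s.loc q).2 + 1 = r then ((1, 0) : ℕ × ℕ)
                 else (0, (s.loc q).2 + 1)) := by
              rw [tsStep_loc, Function.update_self, hact]
              split <;> rfl
            by_cases hcr : (s.loc q).2 + 1 = r
            · -- phase complete : go to line 1, all rooms are one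
              rw [if_pos hcr] at hloc'
              have huniv : insert rm S = Finset.univ := by
                apply Finset.eq_univ_of_card
                rw [hcard, hcr, Fintype.card_fin]
              refine Or.inr (Or.inl ⟨by rw [hloc'], ∅, by rw [hloc']; rfl, ?_, ?_⟩)
              · rw [hloc']; exact hr
              · intro x
                have := hrooms' x
                rw [huniv] at this
                simp only [Finset.mem_univ, if_true] at this
                simp [this]
            · rw [if_neg hcr] at hloc'
              refine Or.inl ⟨by rw [hloc'], insert rm S, by rw [hloc', hcard], ?_, hrooms'⟩
              rw [hloc']
              have := Finset.card_le_univ (insert rm S)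
              rw [hcard, Fintype.card_fin] at this
              omega
        · -- leader line 1 : flip 1 → 0
          have hlc : s.loc q = (1, (s.loc q).2) := by rw [← hl]
          by_cases hm : rm ∈ S
          · have hroom : s.rooms rm = C4.zero := by rw [hR rm, if_pos hm]
            apply inv_noop L q rm ?_ (Or.inl ⟨q, hothers, by
              rw [if_pos hqL]; exact Or.inr (Or.inl ⟨hl, S, hS, hlt, hR⟩)⟩)
            rw [if_pos hqL, hlc, hroom, leaderAct_eval1]
            simp
          · have hroom : s.rooms rm = C4.one := by rw [hR rm, if_neg hm]
            have hact : (if q = L then leaderAct r n (s.loc q) (s.rooms rm)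
                else otherAct r (s.loc q) (s.rooms rm)) =
                (if (s.loc q).2 + 1 = r then ((2, 0), C4.zero, false)
                 else ((1, (s.loc q).2 + 1), C4.zero, false)) := by
              rw [if_pos hqL, hlc, hroom, leaderAct_eval1, if_pos rfl]
            have hrooms' : ∀ x, (tsStep L (q, rm) s).rooms x =
                if x ∈ insert rm S then C4.zero else C4.one := by
              intro x
              rw [tsStep_rooms, hact]
              split
              · exact update_rooms_insert hR rm x
              · exact update_rooms_insert hR rm x
            have hcard : (insert rm S).card = (s.loc q).2 + 1 := by
              rw [Finset.card_insert_of_notMem hm, hS]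
            refine Or.inl ⟨q, hothers', ?_⟩
            rw [if_pos hqL]
            have hloc' : (tsStep L (q, rm) s).loc q =
                (if (s.loc q).2 + 1 = r then ((2, 0) : ℕ × ℕ)
                 else (1, (s.loc q).2 + 1)) := by
              rw [tsStep_loc, Function.update_self, hact]
              split <;> rfl
            by_cases hcr : (s.loc q).2 + 1 = r
            · -- phase complete : go to line 2, all rooms are zero
              rw [if_pos hcr] at hloc'
              have huniv : insert rm S = Finset.univ := by
                apply Finset.eq_univ_of_card
                rw [hcard, hcr, Fintype.card_fin]
              refine Or.inr (Or.inr ⟨by rw [hloc'], ?_⟩)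
              intro x
              have := hrooms' x
              rw [huniv] at this
              simpa using this
            · rw [if_neg hcr] at hloc'
              refine Or.inr (Or.inl ⟨by rw [hloc'], insert rm S, by rw [hloc', hcard], ?_, hrooms'⟩)
              rw [hloc']
              have := Finset.card_le_univ (insert rm S)
              rw [hcard, Fintype.card_fin] at this
              omega
        · -- leader line 2 : flip 0 → next, go to case B
          have hlc : s.loc q = (2, (s.loc q).2) := by rw [← hl]
          have hroom : s.rooms rm = C4.zero := hR rm
          have hact : (if q = L then leaderAct r n (s.loc q) (s.rooms rm)
              else otherAct r (s.loc q) (s.rooms rm)) = ((3, 0), C4.next, false) := by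
            rw [if_pos hqL, hlc, hroom, leaderAct_eval2, if_pos rfl]
          refine Or.inr ⟨⟨rm, ?_, ?_⟩, ?_⟩
          · left
            rw [tsStep_rooms, hact, Function.update_self]
          · intro x hx
            rw [tsStep_rooms, hact, Function.update_of_ne hx]
            exact hR x
          · intro q'
            by_cases hq' : q' = q
            · subst hq'
              unfold InactiveAt
              rw [if_pos hqL, tsStep_loc, Function.update_self, hact]
            · exact hothers' q' hq'
      · -- active non-leader
        rw [if_neg hqL] at hphase
        rcases hphase with ⟨hl, S, hS, hlt, hR⟩ | ⟨hl, S, hS, hlt, hR⟩ | ⟨hl, hR⟩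
        · -- other line 1 : flip 0 → 1
          have hlc : s.loc q = (1, (s.loc q).2) := by rw [← hl]
          by_cases hm : rm ∈ S
          · have hroom : s.rooms rm = C4.one := by rw [hR rm, if_pos hm]
            apply inv_noop L q rm ?_ (Or.inl ⟨q, hothers, by
              rw [if_neg hqL]; exact Or.inl ⟨hl, S, hS, hlt, hR⟩⟩)
            rw [if_neg hqL, hlc, hroom, otherAct_eval1]
            simp
          · have hroom : s.rooms rm = C4.zero := by rw [hR rm, if_neg hm]
            have hact : (if q = L then leaderAct r n (s.loc q) (s.rooms rm)
                else otherAct r (s.loc q) (s.rooms rm)) =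
                (if (s.loc q).2 + 1 = r then ((2, 0), C4.one, false)
                 else ((1, (s.loc q).2 + 1), C4.one, false)) := by
              rw [if_neg hqL, hlc, hroom, otherAct_eval1, if_pos rfl]
            have hrooms' : ∀ x, (tsStep L (q, rm) s).rooms x =
                if x ∈ insert rm S then C4.one else C4.zero := by
              intro x
              rw [tsStep_rooms, hact]
              split
              · exact update_rooms_insert hR rm x
              · exact update_rooms_insert hR rm x
            have hcard : (insert rm S).card = (s.loc q).2 + 1 := by
              rw [Finset.card_insert_of_notMem hm, hS]
            refine Or.inl ⟨q, hothers', ?_⟩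
            rw [if_neg hqL]
            have hloc' : (tsStep L (q, rm) s).loc q =
                (if (s.loc q).2 + 1 = r then ((2, 0) : ℕ × ℕ)
                 else (1, (s.loc q).2 + 1)) := by
              rw [tsStep_loc, Function.update_self, hact]
              split <;> rfl
            by_cases hcr : (s.loc q).2 + 1 = r
            · rw [if_pos hcr] at hloc'
              have huniv : insert rm S = Finset.univ := by
                apply Finset.eq_univ_of_card
                rw [hcard, hcr, Fintype.card_fin]
              refine Or.inr (Or.inl ⟨by rw [hloc'], ∅, by rw [hloc']; rfl, ?_, ?_⟩)
              · rw [hloc']; exact hr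
              · intro x
                have := hrooms' x
                rw [huniv] at this
                simp only [Finset.mem_univ, if_true] at this
                simp [this]
            · rw [if_neg hcr] at hloc'
              refine Or.inl ⟨by rw [hloc'], insert rm S, by rw [hloc', hcard], ?_, hrooms'⟩
              rw [hloc']
              have := Finset.card_le_univ (insert rm S)
              rw [hcard, Fintype.card_fin] at this
              omega
        · -- other line 2 : flip 1 → 0
          have hlc : s.loc q = (2, (s.loc q).2) := by rw [← hl]
          by_cases hm : rm ∈ S
          · have hroom : s.rooms rm = C4.zero := by rw [hR rm, if_pos hm]
            apply inv_noop L q rm ?_ (Or.inl ⟨q, hothers, by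
              rw [if_neg hqL]; exact Or.inr (Or.inl ⟨hl, S, hS, hlt, hR⟩)⟩)
            rw [if_neg hqL, hlc, hroom, otherAct_eval2]
            simp
          · have hroom : s.rooms rm = C4.one := by rw [hR rm, if_neg hm]
            have hact : (if q = L then leaderAct r n (s.loc q) (s.rooms rm)
                else otherAct r (s.loc q) (s.rooms rm)) =
                (if (s.loc q).2 + 1 = r then ((3, 0), C4.zero, false)
                 else ((2, (s.loc q).2 + 1), C4.zero, false)) := by
              rw [if_neg hqL, hlc, hroom, otherAct_eval2, if_pos rfl]
            have hrooms' : ∀ x, (tsStep L (q, rm) s).rooms x =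
                if x ∈ insert rm S then C4.zero else C4.one := by
              intro x
              rw [tsStep_rooms, hact]
              split
              · exact update_rooms_insert hR rm x
              · exact update_rooms_insert hR rm x
            have hcard : (insert rm S).card = (s.loc q).2 + 1 := by
              rw [Finset.card_insert_of_notMem hm, hS]
            refine Or.inl ⟨q, hothers', ?_⟩
            rw [if_neg hqL]
            have hloc' : (tsStep L (q, rm) s).loc q =
                (if (s.loc q).2 + 1 = r then ((3, 0) : ℕ × ℕ)
                 else (2, (s.loc q).2 + 1)) := by
              rw [tsStep_loc, Function.update_self, hact]
              split <;> rfl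
            by_cases hcr : (s.loc q).2 + 1 = r
            · rw [if_pos hcr] at hloc'
              have huniv : insert rm S = Finset.univ := by
                apply Finset.eq_univ_of_card
                rw [hcard, hcr, Fintype.card_fin]
              refine Or.inr (Or.inr ⟨by rw [hloc'], ?_⟩)
              intro x
              have := hrooms' x
              rw [huniv] at this
              simpa using this
            · rw [if_neg hcr] at hloc'
              refine Or.inr (Or.inl ⟨by rw [hloc'], insert rm S, by rw [hloc', hcard], ?_, hrooms'⟩)
              rw [hloc']
              have := Finset.card_le_univ (insert rm S)
              rw [hcard, Fintype.card_fin] at this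
              omega
        · -- other line 3 : flip 0 → next, go to case B
          have hlc : s.loc q = (3, (s.loc q).2) := by rw [← hl]
          have hroom : s.rooms rm = C4.zero := hR rm
          have hact : (if q = L then leaderAct r n (s.loc q) (s.rooms rm)
              else otherAct r (s.loc q) (s.rooms rm)) = ((4, 0), C4.next, false) := by
            rw [if_neg hqL, hlc, hroom, otherAct_eval3, if_pos rfl]
          refine Or.inr ⟨⟨rm, ?_, ?_⟩, ?_⟩
          · left
            rw [tsStep_rooms, hact, Function.update_self]
          · intro x hx
            rw [tsStep_rooms, hact, Function.update_of_ne hx]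
            exact hR x
          · intro q'
            by_cases hq' : q' = q
            · subst hq'
              unfold InactiveAt
              rw [if_neg hqL, tsStep_loc, Function.update_self, hact]
              right; rfl
            · exact hothers' q' hq'
    · -- an inactive prisoner acts : always a noop in case A
      have hIq := hothers q hqp
      unfold InactiveAt at hIq
      apply inv_noop L q rm ?_ (Or.inl ⟨p, hothers, hphase⟩)
      by_cases hqL : q = L
      · rw [if_pos hqL] at hIq
        rw [if_pos hqL]
        rcases Nat.lt_or_ge (s.loc q).1 4 with h4 | h4
        · have hl3 : (s.loc q).1 = 3 := by omega
          have hlc : s.loc q = (3, (s.loc q).2) := by rw [← hl3]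
          rw [hlc, leaderAct_eval3]
          rcases h01 rm with h0 | h0 <;> rw [h0] <;> simp
        · exact leaderAct_high _ _ h4
      · rw [if_neg hqL] at hIq
        rw [if_neg hqL]
        rcases hIq with h0 | h4
        · have hlc : s.loc q = (0, (s.loc q).2) := by rw [← h0]
          rw [hlc, otherAct_eval0]
          rcases h01 rm with hx | hx <;> rw [hx] <;> simp
        · exact otherAct_high _ _ (by omega)
  · -- Case B : one room next/ready, nobody active
    by_cases hqL : q = L
    · have hIq := hall q
      unfold InactiveAt at hIq
      rw [if_pos hqL] at hIq
      rcases Nat.lt_or_ge (s.loc q).1 4 with h4 | h4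
      · have hl3 : (s.loc q).1 = 3 := by omega
        have hlc : s.loc q = (3, (s.loc q).2) := by rw [← hl3]
        by_cases hroom : s.rooms rm = C4.next
        · -- flip next → ready
          have hrmeq : rm = rm0 := by
            by_contra hne
            rw [hz rm hne] at hroom
            exact absurd hroom (by simp)
          have hact : (if q = L then leaderAct r n (s.loc q) (s.rooms rm)
              else otherAct r (s.loc q) (s.rooms rm)) =
              (if (s.loc q).2 + 1 = n then ((4, 0), C4.ready, true)
               else ((3, (s.loc q).2 + 1), C4.ready, false)) := by
            rw [if_pos hqL, hlc, hroom, leaderAct_eval3, if_pos rfl]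
          refine Or.inr ⟨⟨rm0, ?_, ?_⟩, ?_⟩
          · right
            rw [← hrmeq, tsStep_rooms, hact, Function.update_self]
            split <;> rfl
          · intro x hx
            rw [tsStep_rooms, hact, Function.update_of_ne (hrmeq ▸ hx)]
            exact hz x hx
          · intro q'
            by_cases hq' : q' = q
            · subst hq'
              unfold InactiveAt
              rw [if_pos hqL, tsStep_loc, Function.update_self, hact]
              split <;> simp
            · exact inactive_of_other L rm hq' (hall q')
        · -- noop
          apply inv_noop L q rm ?_ (Or.inr ⟨⟨rm0, hrm0, hz⟩, hall⟩)
          rw [if_pos hqL, hlc, leaderAct_eval3, if_neg hroom]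
      · apply inv_noop L q rm ?_ (Or.inr ⟨⟨rm0, hrm0, hz⟩, hall⟩)
        rw [if_pos hqL]
        exact leaderAct_high _ _ h4
    · have hIq := hall q
      unfold InactiveAt at hIq
      rw [if_neg hqL] at hIq
      rcases hIq with h0 | h4
      · have hlc : s.loc q = (0, (s.loc q).2) := by rw [← h0]
        by_cases hroom : s.rooms rm = C4.ready
        · -- flip ready → 0 : become the unique active prisoner
          have hrmeq : rm = rm0 := by
            by_contra hne
            rw [hz rm hne] at hroom
            exact absurd hroom (by simp)
          have hact : (if q = L then leaderAct r n (s.loc q) (s.rooms rm)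
              else otherAct r (s.loc q) (s.rooms rm)) = ((1, 0), C4.zero, false) := by
            rw [if_neg hqL, hlc, hroom, otherAct_eval0, if_pos rfl]
          refine Or.inl ⟨q, ?_, ?_⟩
          · intro q' hq'
            exact inactive_of_other L rm hq' (hall q')
          · rw [if_neg hqL]
            have hloc' : (tsStep L (q, rm) s).loc q = (1, 0) := by
              rw [tsStep_loc, Function.update_self, hact]
            refine Or.inl ⟨by rw [hloc'], ∅, by rw [hloc']; rfl, ?_, ?_⟩
            · rw [hloc']; exact hr
            · intro x
              simp only [Finset.notMem_empty, if_false]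
              by_cases hx : x = rm
              · subst hx
                rw [tsStep_rooms, hact, Function.update_self]
              · rw [tsStep_rooms, hact, Function.update_of_ne hx]
                exact hz x (hrmeq ▸ hx)
        · apply inv_noop L q rm ?_ (Or.inr ⟨⟨rm0, hrm0, hz⟩, hall⟩)
          rw [if_neg hqL, hlc, otherAct_eval0, if_neg hroom]
      · apply inv_noop L q rm ?_ (Or.inr ⟨⟨rm0, hrm0, hz⟩, hall⟩)
        rw [if_neg hqL]
        exact otherAct_high _ _ (by omega)

lemma inv_run (hr : 0 < r) (L : Fin n) (sch : ℕ → Fin n × Fin r) (t : ℕ) :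
    TSInv L (tsRun L sch t) := by
  induction t with
  | zero =>
    left
    refine ⟨L, fun q hq => ?_, ?_⟩
    · unfold InactiveAt
      rw [if_neg hq]
      exact Or.inl rfl
    · rw [if_pos rfl]
      exact Or.inl ⟨rfl, ∅, rfl, hr, fun x => by simp [tsRun]⟩
  | succ t ih =>
    exact inv_step hr L (sch t).1 (sch t).2 _ ih

end TwoSwitchStep

/-- invariant of the two-switch protocol. At every point of any
execution, either all rooms are in configuration `0` or `1` and there is
exactly one active prisoner, or all rooms are in configuration `0` except a
single room in configuration `Next` or `Ready` and no prisoner is active. -/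
theorem two_switch_invariant (n r : ℕ) (hn : 1 < n) (hr : 0 < r) (L : Fin n)
    (sch : ℕ → Fin n × Fin r) (t : ℕ) :
    ((∀ rm : Fin r, (tsRun L sch t).rooms rm = C4.zero ∨
        (tsRun L sch t).rooms rm = C4.one) ∧
      (∃! p : Fin n, tsActive L (tsRun L sch t) p)) ∨
    (∃ rm0 : Fin r,
      ((tsRun L sch t).rooms rm0 = C4.next ∨ (tsRun L sch t).rooms rm0 = C4.ready) ∧
      (∀ rm : Fin r, rm ≠ rm0 → (tsRun L sch t).rooms rm = C4.zero) ∧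
      (∀ p : Fin n, ¬ tsActive L (tsRun L sch t) p)) := by
  rcases inv_run hr L sch t with ⟨p, hothers, hphase⟩ | ⟨⟨rm0, hrm0, hz⟩, hall⟩
  · left
    constructor
    · by_cases hpL : p = L
      · exact phaseL_01 (by rwa [if_pos hpL] at hphase)
      · exact phaseO_01 (by rwa [if_neg hpL] at hphase)
    · refine ⟨p, ?_, ?_⟩
      · simp only [tsActive]
        by_cases hpL : p = L
        · rw [if_pos hpL]
          rw [if_pos hpL] at hphase
          rcases hphase with ⟨hl, _⟩ | ⟨hl, _⟩ | ⟨hl, _⟩ <;> omega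
        · rw [if_neg hpL]
          rw [if_neg hpL] at hphase
          rcases hphase with ⟨hl, _⟩ | ⟨hl, _⟩ | ⟨hl, _⟩ <;> omega
      · intro q hq
        by_contra hne
        have hIq := hothers q hne
        unfold InactiveAt at hIq
        simp only [tsActive] at hq
        by_cases hqL : q = L
        · rw [if_pos hqL] at hIq hq; omega
        · rw [if_neg hqL] at hIq hq; omega
  · right
    refine ⟨rm0, hrm0, hz, ?_⟩
    intro p hp
    have hIp := hall p
    unfold InactiveAt at hIp
    simp only [tsActive] at hp
    by_cases hpL : p = L
    · rw [if_pos hpL] at hIp hp; omega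
    · rw [if_neg hpL] at hIp hp; omega
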